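/- (Naive regression is valid under a balancing covariate with positivity.) Suppose Y(t) is conditionally independent of T given (U, X) (exchangeability given (U, X)), P(T = t | σ(U, X)) > 0 a.s. for both t (positivity), and T is conditionally independent of U given X (X is a balancing covariate of U), and additionally P(T = t | σ(X)) > 0 a.s. Then for each t ∈ {0,1}, μ_t(x) := E[Y(t) | X = x] = E[Y | X = x, T = t] for a.e. x; i.e., the naive regression of Y on (X, T) identifies the conditional mean potential outcomes. -/

import Mathlib

/-!
On the event `{T = t}` the observed outcome is `Y t`, and `{T = t}` is `σ(X, T)`-measurable, so
it suffices to show `E[Y t | X, T] = E[Y t | X]`, i.e. that `Y t` is mean-independent of `T`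
given `X`. Balancing (`T ⟂ U | X`) says that conditioning on `U` in addition to `X` does not
change the conditional law of `T`. Together with exchangeability given `(U, X)` this yields, for
every event `{T ∈ s}`,
`E[1{T ∈ s} Y t | X] = E[P(T ∈ s | U, X) E[Y t | U, X] | X] = P(T ∈ s | X) E[Y t | X]`,
and these identities characterise `E[Y t | X, T]` on the π-system of rectangles generating
`σ(X, T)`.
-/

open MeasureTheory ProbabilityTheory

lemma Set.indicator_eq_indicator_one_smul {α E : Type*} [AddCommMonoid E] [Module ℝ E]
    (A : Set α) (F : α → E) : A.indicator F = (A.indicator fun _ => (1 : ℝ)) • F := by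
  ext a; by_cases ha : a ∈ A <;> simp [ha]

namespace MeasureTheory

lemma integrable_apply_of_fintype {Ω E ι : Type*} {mΩ : MeasurableSpace Ω} {μ : Measure Ω}
    [NormedAddCommGroup E] [Fintype ι] [MeasurableSpace ι] [MeasurableSingletonClass ι]
    {T : Ω → ι} (hT : Measurable T) {Y : ι → Ω → E} (hY : ∀ i, Integrable (Y i) μ) :
    Integrable (fun ω => Y (T ω) ω) μ := by
  have hsum : (fun ω => Y (T ω) ω) = fun ω => ∑ i, (T ⁻¹' {i}).indicator (Y i) ω := by
    classical
    ext ω; simp [Set.indicator_apply, eq_comm]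
  rw [hsum]
  exact integrable_finsetSum _ fun i _ => (hY i).indicator (hT (measurableSet_singleton i))

variable {Ω E : Type*} {m mΩ : MeasurableSpace Ω} {μ : Measure Ω}
  [NormedAddCommGroup E] [NormedSpace ℝ E]

theorem setIntegral_eq_of_isPiSystem {C : Set (Set Ω)} (hm : m ≤ mΩ)
    (h_eq : m = MeasurableSpace.generateFrom C) (h_pi : IsPiSystem C) {f g : Ω → E}
    (hf : Integrable f μ) (hg : Integrable g μ) (h_univ : ∫ ω, f ω ∂μ = ∫ ω, g ω ∂μ)
    (h_basic : ∀ s ∈ C, ∫ ω in s, f ω ∂μ = ∫ ω in s, g ω ∂μ) {s : Set Ω}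
    (hs : MeasurableSet[m] s) : ∫ ω in s, f ω ∂μ = ∫ ω in s, g ω ∂μ := by
  induction s, hs using MeasurableSpace.induction_on_inter h_eq h_pi with
  | empty => simp
  | basic t ht => exact h_basic t ht
  | compl t ht iht =>
    rw [setIntegral_compl (hm t ht) hf, setIntegral_compl (hm t ht) hg, h_univ, iht]
  | iUnion t htd htm iht =>
    rw [integral_iUnion (fun i => hm _ (htm i)) htd hf.integrableOn,
      integral_iUnion (fun i => hm _ (htm i)) htd hg.integrableOn]
    exact tsum_congr iht

theorem condExp_ae_eq_restrict_of_ae_eq_restrict [IsFiniteMeasure μ] [CompleteSpace E]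
    (hm : m ≤ mΩ) {f g : Ω → E} (hf : Integrable f μ) (hg : Integrable g μ) {s : Set Ω}
    (hs : MeasurableSet[m] s) (hfg : f =ᵐ[μ.restrict s] g) :
    μ[f | m] =ᵐ[μ.restrict s] μ[g | m] :=
  calc μ[f | m] =ᵐ[μ.restrict s] (μ.restrict s)[f | m] :=
        (condExp_restrict_ae_eq_restrict hm hs hf).symm
    _ =ᵐ[μ.restrict s] (μ.restrict s)[g | m] := condExp_congr_ae hfg
    _ =ᵐ[μ.restrict s] μ[g | m] := condExp_restrict_ae_eq_restrict hm hs hg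

end MeasureTheory

namespace ProbabilityTheory

variable {Ω α β E : Type*} {m m' mΩ : MeasurableSpace Ω} {mα : MeasurableSpace α}
  {mβ : MeasurableSpace β} [NormedAddCommGroup E] [NormedSpace ℝ E]
  {g : Ω → β} {f : Ω → E} {s : Set β}

lemma IndepFun.integral_indicator_preimage_eq_smul [MeasurableSpace E] [BorelSpace E]
    {ν : Measure Ω} (h : IndepFun g f ν) (hg : Measurable g) (hf : AEStronglyMeasurable f ν)
    (hs : MeasurableSet s) :
    ∫ ω, (g ⁻¹' s).indicator f ω ∂ν = ν.real (g ⁻¹' s) • ∫ ω, f ω ∂ν := by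
  have hind : IndepFun ((g ⁻¹' s).indicator fun _ => (1 : ℝ)) f ν :=
    h.comp (φ := s.indicator fun _ => (1 : ℝ)) (measurable_const.indicator hs) measurable_id
  rw [Set.indicator_eq_indicator_one_smul, hind.integral_smul_eq_smul_integral
    (aestronglyMeasurable_const.indicator (hg hs)) hf, integral_indicator_const _ (hg hs),
    smul_eq_mul, mul_one]

/-- Almost every conditional measure `condExpKernel μ m ω` makes `g` and `f` independent. -/
lemma CondIndepFun.condExp_indicator_preimage_eq_smul [StandardBorelSpace Ω]
    [MeasurableSpace E] [BorelSpace E] [CompleteSpace E] [SecondCountableTopology E]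
    [MeasurableSpace.CountablyGenerated β] {hm : m ≤ mΩ} {μ : Measure Ω} [IsFiniteMeasure μ]
    (h : CondIndepFun m hm g f μ) (hg : Measurable g) (hf : Measurable f)
    (hfi : Integrable f μ) (hs : MeasurableSet s) :
    μ[(g ⁻¹' s).indicator f | m] =ᵐ[μ] μ⟦g ⁻¹' s | m⟧ • μ[f | m] := by
  have hlaw := ae_of_ae_trim hm ((condIndepFun_iff_map_prod_eq_prod_map_map hg hf).mp h)
  filter_upwards [hlaw, condExp_ae_eq_integral_condExpKernel hm (hfi.indicator (hg hs)),
    condExp_ae_eq_integral_condExpKernel hm hfi, condExpKernel_ae_eq_condExp hm (hg hs)]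
    with ω hω hind hf' hgs
  have hindep : IndepFun g f (condExpKernel μ m ω) := by
    rw [indepFun_iff_map_prod_eq_prod_map_map hg.aemeasurable hf.aemeasurable]
    simpa [Kernel.map_apply _ (hg.prodMk hf), Kernel.map_apply _ hg, Kernel.map_apply _ hf,
      Kernel.prod_apply] using hω
  rw [hind, Pi.smul_apply', hf', ← hgs,
    hindep.integral_indicator_preimage_eq_smul hg hf.aestronglyMeasurable hs]

/-- Contraction: conditional independence given the finer `m'` passes down to `m` as soon as
the conditional law of `g` is the same given `m` and given `m'`. -/
lemma condExp_indicator_preimage_eq_smul_of_le [StandardBorelSpace Ω] [MeasurableSpace E]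
    [BorelSpace E] [CompleteSpace E] [SecondCountableTopology E]
    [MeasurableSpace.CountablyGenerated β] {μ : Measure Ω} [IsFiniteMeasure μ]
    (hmm' : m ≤ m') (hm' : m' ≤ mΩ) (h : CondIndepFun m' hm' g f μ) (hg : Measurable g)
    (hf : Measurable f) (hfi : Integrable f μ) (hs : MeasurableSet s)
    (hgs : μ⟦g ⁻¹' s | m'⟧ =ᵐ[μ] μ⟦g ⁻¹' s | m⟧) :
    μ[(g ⁻¹' s).indicator f | m] =ᵐ[μ] μ⟦g ⁻¹' s | m⟧ • μ[f | m] := by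
  have hfine : μ[(g ⁻¹' s).indicator f | m'] =ᵐ[μ] μ⟦g ⁻¹' s | m⟧ • μ[f | m'] := by
    filter_upwards [h.condExp_indicator_preimage_eq_smul hg hf hfi hs, hgs] with ω hω hω'
    rw [hω, Pi.smul_apply', hω', Pi.smul_apply']
  calc μ[(g ⁻¹' s).indicator f | m]
      =ᵐ[μ] μ[μ[(g ⁻¹' s).indicator f | m'] | m] := (condExp_condExp_of_le hmm' hm').symm
    _ =ᵐ[μ] μ[μ⟦g ⁻¹' s | m⟧ • μ[f | m'] | m] := condExp_congr_ae hfine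
    _ =ᵐ[μ] μ⟦g ⁻¹' s | m⟧ • μ[μ[f | m'] | m] :=
      condExp_smul_of_aestronglyMeasurable_left stronglyMeasurable_condExp.aestronglyMeasurable
        (integrable_condExp.congr hfine) integrable_condExp
    _ =ᵐ[μ] μ⟦g ⁻¹' s | m⟧ • μ[f | m] := by
      filter_upwards [condExp_condExp_of_le (f := f) hmm' hm'] with ω hω
      rw [Pi.smul_apply', hω, Pi.smul_apply']

lemma condExp_comap_prodMk_ae_eq [CompleteSpace E] {μ : Measure Ω} [IsFiniteMeasure μ]
    {X : Ω → α} (hX : Measurable X) (hg : Measurable g) (hfi : Integrable f μ)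
    (h : ∀ s, MeasurableSet s → μ[(g ⁻¹' s).indicator f | mα.comap X]
      =ᵐ[μ] μ⟦g ⁻¹' s | mα.comap X⟧ • μ[f | mα.comap X]) :
    μ[f | (mα.prod mβ).comap fun ω => (X ω, g ω)] =ᵐ[μ] μ[f | mα.comap X] := by
  have hXle : mα.comap X ≤ (mα.prod mβ).comap fun ω => (X ω, g ω) := by
    rw [MeasurableSpace.comap_prodMk]; exact le_sup_left
  have hXg := (hX.prodMk hg).comap_le
  refine (ae_eq_condExp_of_forall_setIntegral_eq hXg hfi
    (fun _ _ _ => integrable_condExp.integrableOn) (fun S hS _ => ?_)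
    (stronglyMeasurable_condExp.mono hXle).aestronglyMeasurable).symm
  refine setIntegral_eq_of_isPiSystem hXg
    (by rw [← generateFrom_prod, MeasurableSpace.comap_generateFrom]; rfl)
    (isPiSystem_prod.comap _) integrable_condExp hfi (integral_condExp hX.comap_le) ?_ hS
  rintro _ ⟨_, ⟨r, hr, s, hs, rfl⟩, rfl⟩
  have hXr : MeasurableSet[mα.comap X] (X ⁻¹' r) := ⟨r, hr, rfl⟩
  have hpull : μ[(g ⁻¹' s).indicator (μ[f | mα.comap X]) | mα.comap X]
      =ᵐ[μ] μ⟦g ⁻¹' s | mα.comap X⟧ • μ[f | mα.comap X] := by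
    rw [Set.indicator_eq_indicator_one_smul]
    refine condExp_smul_of_aestronglyMeasurable_right ((integrable_const _).indicator (hg hs))
      ?_ stronglyMeasurable_condExp.aestronglyMeasurable
    rw [← Set.indicator_eq_indicator_one_smul]
    exact integrable_condExp.indicator (hg hs)
  rw [Set.mk_preimage_prod, ← setIntegral_indicator (hg hs), ← setIntegral_indicator (hg hs),
    ← setIntegral_condExp hX.comap_le (integrable_condExp.indicator (hg hs)) hXr,
    ← setIntegral_condExp hX.comap_le (hfi.indicator (hg hs)) hXr]
  exact setIntegral_congr_ae (hX.comap_le _ hXr) ((hpull.trans (h s hs).symm).mono fun _ h _ => h)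

lemma CondIndepFun.condExp_indicator_comap_prodMk_ae_eq {γ : Type*} {mγ : MeasurableSpace γ}
    [StandardBorelSpace Ω] {μ : Measure Ω} [IsFiniteMeasure μ] {X : Ω → α} {U : Ω → γ}
    (hX : Measurable X) (hU : Measurable U) (hg : Measurable g)
    (h : CondIndepFun (mα.comap X) hX.comap_le g U μ) (hs : MeasurableSet s) :
    μ⟦g ⁻¹' s | (mγ.prod mα).comap fun ω => (U ω, X ω)⟧ =ᵐ[μ] μ⟦g ⁻¹' s | mα.comap X⟧ := by
  have hswap : ((mγ.prod mα).comap fun ω => (U ω, X ω))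
      = (mα.prod mγ).comap fun ω => (X ω, U ω) := by
    rw [MeasurableSpace.comap_prodMk, MeasurableSpace.comap_prodMk, sup_comm]
  rw [hswap]
  refine condExp_comap_prodMk_ae_eq hX hU ((integrable_const _).indicator (hg hs))
    fun v hv => ?_
  rw [Set.indicator_indicator]
  exact (condIndepFun_iff_condExp_inter_preimage_eq_mul hU hg).mp h.symm v s hv hs

end ProbabilityTheory

theorem naive_regression_balancing_covariate_general
    {Ω 𝒰 : Type*} [MeasurableSpace Ω] [StandardBorelSpace Ω] [MeasurableSpace 𝒰]
    (μ : Measure Ω) [IsProbabilityMeasure μ]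
    {m d : ℕ}
    (X : Ω → Fin m → ℝ) (hX : Measurable X)
    (T : Ω → Bool) (hT : Measurable T)
    (Uv : Ω → 𝒰) (hU : Measurable Uv)
    (Y : Bool → Ω → Fin d → ℝ) (hY : ∀ t, Measurable (Y t))
    (hYint : ∀ t, Integrable (Y t) μ)
    -- exchangeability given `(U, X)`: `Y t ⟂ T | (U, X)`
    (hexch : ∀ t, CondIndepFun
        (MeasurableSpace.comap (fun ω => (Uv ω, X ω)) inferInstance)
        ((hU.prodMk hX).comap_le) (Y t) T μ)
    -- `X` is a balancing covariate of `U`: `T ⟂ U | X`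
    (hbal : CondIndepFun (MeasurableSpace.comap X inferInstance) hX.comap_le T Uv μ) :
    -- conclusion: `μ_t(x) = E[Y | X = x, T = t]` for a.e. `x`
    ∀ t : Bool, ∀ᵐ ω ∂μ, T ω = t →
      (μ[Y t | MeasurableSpace.comap X inferInstance]) ω
        = (μ[(fun ω => Y (T ω) ω) |
            MeasurableSpace.comap (fun ω => (X ω, T ω)) inferInstance]) ω := by
  intro t
  have hX_le_UX : MeasurableSpace.comap X inferInstance
      ≤ MeasurableSpace.comap (fun ω => (Uv ω, X ω)) inferInstance :=
    (measurable_snd.comp (comap_measurable fun ω => (Uv ω, X ω))).comap_le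
  have hmean : μ[Y t | MeasurableSpace.comap (fun ω => (X ω, T ω)) inferInstance]
      =ᵐ[μ] μ[Y t | MeasurableSpace.comap X inferInstance] :=
    condExp_comap_prodMk_ae_eq hX hT (hYint t) fun s hs =>
      condExp_indicator_preimage_eq_smul_of_le hX_le_UX _ (hexch t).symm hT (hY t) (hYint t) hs
        (hbal.condExp_indicator_comap_prodMk_ae_eq hX hU hT hs)
  have hTt : MeasurableSet[MeasurableSpace.comap (fun ω => (X ω, T ω)) inferInstance]
      (T ⁻¹' {t}) := ⟨Set.univ ×ˢ {t}, MeasurableSet.univ.prod (measurableSet_singleton t),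
        by ext; simp⟩
  have hobs : μ[fun ω => Y (T ω) ω | MeasurableSpace.comap (fun ω => (X ω, T ω)) inferInstance]
      =ᵐ[μ.restrict (T ⁻¹' {t})]
        μ[Y t | MeasurableSpace.comap (fun ω => (X ω, T ω)) inferInstance] :=
    condExp_ae_eq_restrict_of_ae_eq_restrict (hX.prodMk hT).comap_le
      (integrable_apply_of_fintype hT hYint) (hYint t) hTt
      (ae_restrict_of_forall_mem (hT (measurableSet_singleton t)) fun ω (hω : T ω = t) =>
        congrArg (Y · ω) hω)
  exact (ae_restrict_iff' (hT (measurableSet_singleton t))).mp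
    (hobs.trans (ae_restrict_of_ae hmean)).symm

/-- **Naive regression is valid under a balancing covariate with positivity.** Suppose
`Y t ⟂ T | (U, X)` (exchangeability given `(U, X)`), `P(T = t | σ(U, X)) > 0` a.s. for
both `t` (positivity), `T ⟂ U | X` (`X` is a balancing covariate of `U`), and
`P(T = t | σ(X)) > 0` a.s. Then for each `t`, `μ_t(x) = E[Y | X = x, T = t]` for a.e.
`x`: the naive regression of the observed outcome `Y = Y(T)` on `(X, T)` identifies
the conditional mean potential outcomes. -/
theorem naive_regression_balancing_covariate
    {Ω 𝒰 : Type*} [MeasurableSpace Ω] [StandardBorelSpace Ω] [MeasurableSpace 𝒰]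
    (μ : Measure Ω) [IsProbabilityMeasure μ]
    {m d : ℕ}
    (X : Ω → Fin m → ℝ) (hX : Measurable X)
    (T : Ω → Bool) (hT : Measurable T)
    (Uv : Ω → 𝒰) (hU : Measurable Uv)
    (Y : Bool → Ω → Fin d → ℝ) (hY : ∀ t, Measurable (Y t))
    (hYint : ∀ t, Integrable (Y t) μ)
    -- exchangeability given `(U, X)`: `Y t ⟂ T | (U, X)`
    (hexch : ∀ t, CondIndepFun
        (MeasurableSpace.comap (fun ω => (Uv ω, X ω)) inferInstance)
        ((hU.prodMk hX).comap_le) (Y t) T μ)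
    -- positivity given `(U, X)`
    (hpos : ∀ t : Bool, ∀ᵐ ω ∂μ,
        0 < (μ[(fun ω => if T ω = t then (1 : ℝ) else 0) |
            MeasurableSpace.comap (fun ω => (Uv ω, X ω)) inferInstance]) ω)
    -- `X` is a balancing covariate of `U`: `T ⟂ U | X`
    (hbal : CondIndepFun (MeasurableSpace.comap X inferInstance) hX.comap_le T Uv μ)
    -- positivity given `X`
    (hposX : ∀ t : Bool, ∀ᵐ ω ∂μ,
        0 < (μ[(fun ω => if T ω = t then (1 : ℝ) else 0) |
            MeasurableSpace.comap X inferInstance]) ω) :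
    -- conclusion: `μ_t(x) = E[Y | X = x, T = t]` for a.e. `x`
    ∀ t : Bool, ∀ᵐ ω ∂μ, T ω = t →
      (μ[Y t | MeasurableSpace.comap X inferInstance]) ω
        = (μ[(fun ω => Y (T ω) ω) |
            MeasurableSpace.comap (fun ω => (X ω, T ω)) inferInstance]) ω :=
  naive_regression_balancing_covariate_general μ X hX T hT Uv hU Y hY hYint hexch hbal
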